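/- arXiv:2509.06397 — 4 statements merged into one kernel-verified Lean document; each statement's English description precedes it below -/
import Mathlib

section
/- Let K be a field with q elements and A a cyclic group of order p^n generated by a, where p is an odd prime, gcd(q, p) = 1, and the order of q in (ℤ/p^nℤ)^× is φ(p^n). Set A_i = ⟨a^{p^i}⟩ and \widehat{H} = |H|^{-1} ∑_{h∈H} h for a subgroup H. Then the elements e₀ = \widehat{A₀} and e_i = \widehat{A_i} − \widehat{A_{i−1}} for 1 ≤ i ≤ n form a complete set of pairwise orthogonal idempotents of K[A] summing to 1. -/
open MonoidAlgebra

lemma hat_mul_hat_aux {K A : Type*} [Field K] [CommGroup A] [DecidableEq A]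
    (H H' : Subgroup A) (hHf : (H : Set A).Finite) (hH'f : (H' : Set A).Finite)
    (hle : H ≤ H') (hcard : (Nat.card H : K) ≠ 0) :
    ((Nat.card H : K)⁻¹ • ∑ h ∈ hHf.toFinset, MonoidAlgebra.single h (1 : K)) *
      ((Nat.card H' : K)⁻¹ • ∑ h ∈ hH'f.toFinset, MonoidAlgebra.single h (1 : K)) =
    (Nat.card H' : K)⁻¹ • ∑ h ∈ hH'f.toFinset, MonoidAlgebra.single h (1 : K) := by
  have hinner : ∀ h ∈ hHf.toFinset,
      (MonoidAlgebra.single h (1:K)) * ∑ h' ∈ hH'f.toFinset, MonoidAlgebra.single h' (1:K)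
        = ∑ h' ∈ hH'f.toFinset, MonoidAlgebra.single h' (1:K) := by
    intro h hh
    rw [Finset.mul_sum]
    refine Finset.sum_equiv (Equiv.mulLeft h) ?_ ?_
    · intro x
      simp only [Set.Finite.mem_toFinset, SetLike.mem_coe, Equiv.coe_mulLeft]
      have hhH' : h ∈ H' := hle (by simpa using hh)
      constructor
      · intro hx; exact H'.mul_mem hhH' hx
      · intro hx; simpa using H'.mul_mem (H'.inv_mem hhH') hx
    · intro x hx
      simp [MonoidAlgebra.single_mul_single]
  rw [smul_mul_assoc, mul_smul_comm, Finset.sum_mul]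
  have h2 : ∑ h ∈ hHf.toFinset,
      (MonoidAlgebra.single h (1:K)) * ∑ h' ∈ hH'f.toFinset, MonoidAlgebra.single h' (1:K)
      = (Nat.card H : K) • ∑ h' ∈ hH'f.toFinset, MonoidAlgebra.single h' (1:K) := by
    rw [Finset.sum_congr rfl hinner, Finset.sum_const]
    have : hHf.toFinset.card = Nat.card H :=
      (Nat.card_eq_card_finite_toFinset hHf).symm
    rw [this, ← Nat.cast_smul_eq_nsmul K]
  rw [h2, smul_smul, smul_smul, mul_comm ((Nat.card H : K))⁻¹, mul_assoc,
    inv_mul_cancel₀ hcard, mul_one]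


/-- Let `K` be a field with `q` elements and `A` a cyclic group of order `p^n` generated
by `a`, where `p` is an odd prime, `gcd q p = 1`, and the order of `q` in `(ℤ/p^n)ˣ` is
`φ(p^n)`. With `A_i = ⟨a^(p^i)⟩` and `Ĥ = |H|⁻¹ ∑_{h ∈ H} h`, the elements
`e₀ = Â₀` and `e_i = Â_i − Â_{i−1}` for `1 ≤ i ≤ n` form a complete set of pairwise
orthogonal idempotents of `K[A]` summing to `1`. -/
theorem primitive_idempotents_cyclic_group_algebra
    (K : Type*) [Field K] [Fintype K] (q : ℕ) (hq : Fintype.card K = q)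
    (A : Type*) [CommGroup A] [Fintype A] [DecidableEq A]
    (p n : ℕ) (hp : p.Prime) (hpodd : Odd p)
    (a : A) (hgen : ∀ x : A, x ∈ Subgroup.zpowers a) (hord : orderOf a = p ^ n)
    (hqp : Nat.gcd q p = 1)
    (hqord : orderOf ((q : ZMod (p ^ n))) = Nat.totient (p ^ n)) :
    let hat : Subgroup A → MonoidAlgebra K A := fun H =>
      (Nat.card H : K)⁻¹ • ∑ h ∈ (H : Set A).toFinite.toFinset, MonoidAlgebra.single h (1 : K)
    let e : Fin (n + 1) → MonoidAlgebra K A := fun i =>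
      if (i : ℕ) = 0 then hat (Subgroup.zpowers a)
      else hat (Subgroup.zpowers (a ^ p ^ (i : ℕ))) -
        hat (Subgroup.zpowers (a ^ p ^ ((i : ℕ) - 1)))
    (∀ i, IsIdempotentElem (e i)) ∧ (∀ i j, i ≠ j → e i * e j = 0) ∧ (∑ i, e i = 1) := by
  intro hat e
  set S : ℕ → Subgroup A := fun i => Subgroup.zpowers (a ^ p ^ i) with hSdef
  -- p is nonzero in K
  have hpK : (p : K) ≠ 0 := by
    intro h0
    have hdvd : ringChar K ∣ p := (ringChar.spec K p).mp h0
    have hchar : ringChar K = p := by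
      rcases (Nat.Prime.eq_one_or_self_of_dvd hp _ hdvd) with h1 | h1
      · exact absurd h1 (CharP.ringChar_ne_one)
      · exact h1
    haveI : CharP K p := hchar ▸ ringChar.charP K
    haveI : Fact p.Prime := ⟨hp⟩
    obtain ⟨m, hm⟩ := FiniteField.card K p
    have hpq : p ∣ q := by
      rw [← hq, hm.2]
      exact dvd_pow_self p m.2.ne'
    have : p ∣ 1 := hqp ▸ Nat.dvd_gcd hpq dvd_rfl
    exact absurd (Nat.dvd_one.mp this) hp.ne_one
  -- card of each S i is nonzero in K
  have hcardK : ∀ i, (Nat.card (S i) : K) ≠ 0 := by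
    intro i
    have h1 : Nat.card (S i) = orderOf (a ^ p ^ i) := Nat.card_zpowers _
    have h2 : orderOf (a ^ p ^ i) ∣ p ^ n := by
      rw [← hord]; exact orderOf_pow_dvd _
    obtain ⟨m, _, hm⟩ := (Nat.dvd_prime_pow hp).mp (h1 ▸ h2)
    rw [hm]
    push_cast
    exact pow_ne_zero _ hpK
  -- monotonicity
  have hmono : ∀ k l : ℕ, k ≤ l → S l ≤ S k := by
    intro k l hkl
    rw [hSdef]
    refine Subgroup.zpowers_le.mpr ?_
    have : a ^ p ^ l = (a ^ p ^ k) ^ p ^ (l - k) := by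
      rw [← pow_mul, ← pow_add, Nat.add_sub_cancel' hkl]
    rw [this]
    exact Subgroup.pow_mem _ (Subgroup.mem_zpowers _) _
  -- key multiplication rule
  have key : ∀ k l : ℕ, k ≤ l → hat (S k) * hat (S l) = hat (S k) := by
    intro k l hkl
    rw [mul_comm]
    exact hat_mul_hat_aux (S l) (S k) _ _ (hmono k l hkl) (hcardK l)
  -- hat (S n) = 1
  have hSn1 : hat (S n) = 1 := by
    have han : a ^ p ^ n = 1 := by rw [← hord]; exact pow_orderOf_eq_one a
    have hbot : S n = ⊥ := by
      rw [hSdef]; simp [han]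
    rw [hbot]
    show (Nat.card (⊥ : Subgroup A) : K)⁻¹ • _ = 1
    have hc : Nat.card (⊥ : Subgroup A) = 1 := Subgroup.card_bot
    have hfin : ((⊥ : Subgroup A) : Set A).toFinite.toFinset = {1} := by
      ext x; simp
    rw [hc, hfin]
    simp [MonoidAlgebra.one_def]
  -- rewriting e
  have he0 : ∀ i : Fin (n+1), (i : ℕ) = 0 → e i = hat (S 0) := by
    intro i hi
    have : S 0 = Subgroup.zpowers a := by rw [hSdef]; simp
    simp only [e, hi, if_true, this]
  have hei : ∀ i : Fin (n+1), (i : ℕ) ≠ 0 →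
      e i = hat (S (i : ℕ)) - hat (S ((i : ℕ) - 1)) := by
    intro i hi
    simp only [e, hi, if_false, hSdef]
  -- e i * hat (S l) = e i when all indices ≤ l
  have hemul : ∀ (i : Fin (n+1)) (l : ℕ), (i : ℕ) ≤ l → e i * hat (S l) = e i := by
    intro i l hil
    by_cases hi : (i : ℕ) = 0
    · rw [he0 i hi]; exact key 0 l (Nat.zero_le l)
    · rw [hei i hi, sub_mul, key _ l hil, key _ l (le_trans (Nat.sub_le _ _) hil)]
  refine ⟨?_, ?_, ?_⟩
  · -- idempotent
    intro i
    by_cases hi : (i : ℕ) = 0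
    · rw [IsIdempotentElem, he0 i hi]; exact key 0 0 le_rfl
    · rw [IsIdempotentElem, hei i hi]
      have h1 : hat (S (i:ℕ)) * hat (S (i:ℕ)) = hat (S (i:ℕ)) := key _ _ le_rfl
      have h2 : hat (S ((i:ℕ)-1)) * hat (S (i:ℕ)) = hat (S ((i:ℕ)-1)) :=
        key _ _ (Nat.sub_le _ _)
      have h3 : hat (S ((i:ℕ)-1)) * hat (S ((i:ℕ)-1)) = hat (S ((i:ℕ)-1)) :=
        key _ _ le_rfl
      have h4 : hat (S (i:ℕ)) * hat (S ((i:ℕ)-1)) = hat (S ((i:ℕ)-1)) := by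
        rw [mul_comm]; exact h2
      linear_combination h1 - h4 - h2 + h3
  · -- orthogonal
    have horth : ∀ i j : Fin (n+1), (i : ℕ) < (j : ℕ) → e i * e j = 0 := by
      intro i j hij
      have hj : (j : ℕ) ≠ 0 := by omega
      rw [hei j hj, mul_sub, hemul i _ (le_of_lt hij), hemul i _ (by omega), sub_self]
    intro i j hij
    rcases lt_trichotomy (i : ℕ) (j : ℕ) with h | h | h
    · exact horth i j h
    · exact absurd (Fin.ext h) hij
    · rw [mul_comm]; exact horth j i h
  · -- sum
    have hg : ∀ i : Fin (n+1), e i =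
        (fun k : ℕ => if k = 0 then hat (S 0) else hat (S k) - hat (S (k-1))) (i : ℕ) := by
      intro i
      by_cases hi : (i : ℕ) = 0
      · rw [he0 i hi]; simp [hi]
      · rw [hei i hi]; simp [hi]
    rw [Finset.sum_congr rfl (fun i _ => hg i),
      Fin.sum_univ_eq_sum_range (fun k : ℕ => if k = 0 then hat (S 0) else hat (S k) - hat (S (k-1)))]
    have htel : ∀ m : ℕ, ∑ k ∈ Finset.range (m+1),
        (if k = 0 then hat (S 0) else hat (S k) - hat (S (k-1))) = hat (S m) := by
      intro m
      induction m with
      | zero => simp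
      | succ m ih =>
        rw [Finset.sum_range_succ, ih]
        simp only [Nat.succ_ne_zero, if_false, Nat.add_sub_cancel]
        ring
    rw [htel n, hSn1]
end

section
/- Let R be a finite commutative chain ring with maximal ideal ⟨s⟩ of nilpotency index t, and let f ∈ R[x] be a monic polynomial whose reduction modulo ⟨s^{t-k}⟩ is considered, with 0 ≤ k ≤ t. Then the ideal s^k·(R[x]/⟨f⟩) is isomorphic as a module to (R/⟨s^{t-k}⟩)[x]/⟨f̄⟩, and hence |s^k·(R[x]/⟨f⟩)| = |R/⟨s⟩|^{(t-k)·deg f}. -/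
/-!
In a local ring whose maximal ideal is generated by a nilpotent `s`, every nonzero element is a
unit times a power of `s`; so if `s ^ t = 0 ≠ s ^ (t - 1)`, the annihilator of `s ^ k` is
`(s ^ (t - k))`, and multiplication by `s ^ j` identifies `R ⧸ (s)` with `(s ^ j) ⧸ (s ^ (j + 1))`,
whence `|R ⧸ (s ^ j)| = |R ⧸ (s)| ^ j`. Since `f` is monic, every class in `Γ = R[X] ⧸ (f)` has a
representative of degree `< deg f`, and such a representative is killed by `s ^ k` in `Γ` only if
it is already killed in `R[X]`; hence the annihilator of `s ^ k` in `Γ` is `s ^ (t - k) Γ`. Thus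
`s ^ k Γ ≅ Γ ⧸ s ^ (t - k) Γ ≅ (R ⧸ (s ^ (t - k)))[X] ⧸ (f̄)`, which is free of rank `deg f` over
`R ⧸ (s ^ (t - k))`.
-/

namespace IsLocalRing

variable {R : Type*} [CommRing R] [IsLocalRing R] {s : R}

theorem exists_eq_unit_mul_pow (hM : maximalIdeal R = Ideal.span {s}) (hs : IsNilpotent s)
    {a : R} (ha : a ≠ 0) : ∃ (u : Rˣ) (i : ℕ), a = u * s ^ i := by
  classical
  obtain ⟨t, hst⟩ := hs
  obtain ⟨i, hi, hi'⟩ : ∃ i, a ∈ Ideal.span {s ^ i} ∧ a ∉ Ideal.span {s ^ (i + 1)} := by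
    let P i := a ∈ Ideal.span {s ^ i}
    have hP0 : P 0 := show a ∈ Ideal.span {s ^ 0} by simp
    refine ⟨Nat.findGreatest P t, Nat.findGreatest_spec (Nat.zero_le t) hP0, fun h ↦ ?_⟩
    rcases le_or_gt (Nat.findGreatest P t + 1) t with hle | hlt
    · exact Nat.findGreatest_is_greatest (Nat.lt_succ_self _) hle h
    · rw [pow_eq_zero_of_le hlt.le hst, Ideal.span_singleton_eq_bot.2 rfl] at h
      exact ha h
  obtain ⟨b, rfl⟩ := Ideal.mem_span_singleton'.1 hi
  have hb : IsUnit b := by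
    by_contra hb
    obtain ⟨c, rfl⟩ := Ideal.mem_span_singleton'.1 (hM ▸ (mem_maximalIdeal b).2 hb)
    exact hi' (Ideal.mem_span_singleton'.2 ⟨c, by ring⟩)
  exact ⟨hb.unit, i, rfl⟩

theorem torsionOf_pow {t j : ℕ} (hM : maximalIdeal R = Ideal.span {s}) (hst : s ^ t = 0)
    (hst' : s ^ (t - 1) ≠ 0) (hj : j ≤ t) :
    Ideal.torsionOf R R (s ^ j) = Ideal.span {s ^ (t - j)} := by
  ext a
  rw [Ideal.mem_torsionOf_iff, smul_eq_mul]
  constructor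
  · intro h
    by_cases ha : a = 0
    · simp [ha]
    obtain ⟨u, i, rfl⟩ := exists_eq_unit_mul_pow hM ⟨t, hst⟩ ha
    have hsij : s ^ (i + j) = 0 := by
      rwa [mul_assoc, ← pow_add, Units.mul_right_eq_zero] at h
    have hij : t ≤ i + j := by
      by_contra! hlt
      apply hst'
      rw [← Nat.add_sub_of_le (Nat.le_sub_one_of_lt hlt), pow_add, hsij, zero_mul]
    exact Ideal.mem_span_singleton'.2 ⟨u * s ^ (i + j - t), by
      rw [mul_assoc, ← pow_add]; congr 2; omega⟩
  · intro h
    obtain ⟨c, rfl⟩ := Ideal.mem_span_singleton'.1 h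
    rw [mul_assoc, ← pow_add, Nat.sub_add_cancel hj, hst, mul_zero]

theorem pow_mul_mem_span_pow_succ_iff {t j : ℕ} (hM : maximalIdeal R = Ideal.span {s})
    (hst : s ^ t = 0) (hst' : s ^ (t - 1) ≠ 0) (hj : j < t) {a : R} :
    s ^ j * a ∈ Ideal.span {s ^ (j + 1)} ↔ a ∈ Ideal.span {s} := by
  constructor
  · intro h
    obtain ⟨c, hc⟩ := Ideal.mem_span_singleton'.1 h
    have hac : a - c * s ∈ Ideal.span {s ^ (t - j)} := by
      rw [← torsionOf_pow hM hst hst' hj.le, Ideal.mem_torsionOf_iff, smul_eq_mul, sub_mul,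
        mul_assoc, ← pow_succ', hc, mul_comm, sub_self]
    have hsub : Ideal.span {s ^ (t - j)} ≤ Ideal.span {s} :=
      Ideal.span_singleton_le_span_singleton.2 (dvd_pow_self s (by omega))
    simpa using add_mem (hsub hac) (Ideal.mul_mem_left _ c (Ideal.mem_span_singleton_self s))
  · intro h
    obtain ⟨c, rfl⟩ := Ideal.mem_span_singleton'.1 h
    exact Ideal.mem_span_singleton'.2 ⟨c, by ring⟩

theorem card_quotient_span_pow {t j : ℕ} (hM : maximalIdeal R = Ideal.span {s})
    (hst : s ^ t = 0) (hst' : s ^ (t - 1) ≠ 0) (hj : j ≤ t) :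
    Nat.card (R ⧸ Ideal.span {s ^ j}) = Nat.card (R ⧸ Ideal.span {s}) ^ j := by
  induction j with
  | zero => simp
  | succ j ih =>
    let μ : R →+ R := AddMonoidHom.mulLeft (s ^ j)
    have hrange : μ.range = (Ideal.span {s ^ j}).toAddSubgroup := by
      ext a
      simp [μ, Ideal.mem_span_singleton', mul_comm]
    have hcomap : (Ideal.span {s ^ (j + 1)}).toAddSubgroup.comap μ =
        (Ideal.span {s}).toAddSubgroup := by
      ext a
      exact pow_mul_mem_span_pow_succ_iff hM hst hst' hj
    have hle : Ideal.span {s ^ (j + 1)} ≤ Ideal.span {s ^ j} :=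
      Ideal.span_singleton_le_span_singleton.2 (pow_dvd_pow s j.le_succ)
    have hrel : (Ideal.span {s ^ (j + 1)}).toAddSubgroup.relIndex
        (Ideal.span {s ^ j}).toAddSubgroup = Nat.card (R ⧸ Ideal.span {s}) := by
      rw [← hrange, ← AddSubgroup.index_comap, hcomap]
      rfl
    change AddSubgroup.index _ = _
    rw [← AddSubgroup.relIndex_mul_index (Submodule.toAddSubgroup_mono hle), hrel]
    change _ * Nat.card (R ⧸ Ideal.span {s ^ j}) = _
    rw [ih (by omega), pow_succ, mul_comm]

end IsLocalRing

open Polynomial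

namespace AdjoinRoot

variable {R : Type*} [CommRing R] {f : R[X]}

theorem map_torsionOf_of (hf : f.Monic) (r : R) :
    (Ideal.torsionOf R R r).map (of f) =
      Ideal.torsionOf (AdjoinRoot f) (AdjoinRoot f) (of f r) := by
  apply le_antisymm
  · rw [Ideal.map_le_iff_le_comap]
    intro a ha
    rw [Ideal.mem_comap, Ideal.mem_torsionOf_iff, smul_eq_mul, ← map_mul,
      ← smul_eq_mul, (Ideal.mem_torsionOf_iff r a).1 ha, map_zero]
  · intro x hx
    rw [Ideal.mem_torsionOf_iff, smul_eq_mul] at hx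
    obtain ⟨p, rfl⟩ := mk_surjective x
    set q := p %ₘ f
    have hpq : mk f p = mk f q := (mk_leftInverse hf (mk f p)).symm
    have hrq : C r * q = 0 := by
      by_contra h
      have : Nontrivial R := nontrivial_iff.1 (nontrivial_of_ne _ _ h)
      refine mk_ne_zero_of_degree_lt hf h ((C_mul' r q ▸ degree_smul_le r q).trans_lt
        (degree_modByMonic_lt _ hf)) ?_
      rw [map_mul, mk_C, ← hpq, mul_comm, hx]
    have hq : q ∈ (Ideal.torsionOf R R r).map C := by
      rw [Ideal.mem_map_C_iff]
      intro n
      rw [Ideal.mem_torsionOf_iff, smul_eq_mul, mul_comm, ← coeff_C_mul, hrq, coeff_zero]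
    rw [hpq, of, ← Ideal.map_map]
    exact Ideal.mem_map_of_mem _ hq

theorem card_eq_pow_natDegree (hf : f.Monic) :
    Nat.card (AdjoinRoot f) = Nat.card R ^ f.natDegree := by
  rw [Nat.card_congr (powerBasis' hf).basis.equivFun.toEquiv, Nat.card_fun, Nat.card_fin,
    powerBasis'_dim]

theorem card_map_eq_pow_natDegree {S : Type*} [CommRing S] (hf : f.Monic) (φ : R →+* S) :
    Nat.card (AdjoinRoot (f.map φ)) = Nat.card S ^ f.natDegree := by
  rw [card_eq_pow_natDegree (hf.map φ)]
  rcases subsingleton_or_nontrivial S with hS | hS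
  · simp [Nat.card_unique]
  · rw [hf.natDegree_map]

end AdjoinRoot

theorem card_scaled_quotient_chain_ring_general
    (R : Type*) [CommRing R] [IsLocalRing R]
    (s : R) (hM : IsLocalRing.maximalIdeal R = Ideal.span {s})
    (t : ℕ) (hst : s ^ t = 0) (hst' : s ^ (t - 1) ≠ 0)
    (f : Polynomial R) (hf : f.Monic) (k : ℕ) (hk : k ≤ t) :
    let Γ := Polynomial R ⧸ Ideal.span {f}
    let sk : Γ := Ideal.Quotient.mk (Ideal.span {f}) (Polynomial.C (s ^ k))
    let fbar : Polynomial (R ⧸ Ideal.span {s ^ (t - k)}) :=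
      f.map (Ideal.Quotient.mk (Ideal.span ({s ^ (t - k)} : Set R)))
    Nonempty ((Ideal.span {sk} : Ideal Γ) ≃+
        (Polynomial (R ⧸ Ideal.span {s ^ (t - k)}) ⧸ Ideal.span {fbar})) ∧
      Nat.card (Ideal.span {sk} : Ideal Γ) =
        Nat.card (R ⧸ Ideal.span ({s} : Set R)) ^ ((t - k) * f.natDegree) := by
  intro Γ sk fbar
  have hker : Ideal.torsionOf (AdjoinRoot f) (AdjoinRoot f) (AdjoinRoot.of f (s ^ k)) =
      (Ideal.span {s ^ (t - k)}).map (AdjoinRoot.of f) := by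
    rw [← IsLocalRing.torsionOf_pow hM hst hst' hk, AdjoinRoot.map_torsionOf_of hf]
  let e : (Ideal.span {sk} : Ideal Γ) ≃+
      Polynomial (R ⧸ Ideal.span {s ^ (t - k)}) ⧸ Ideal.span {fbar} :=
    (Ideal.quotTorsionOfEquivSpanSingleton (AdjoinRoot f) (AdjoinRoot f)
        (AdjoinRoot.of f (s ^ k))).symm.toAddEquiv.trans
      ((Ideal.quotEquivOfEq hker).toAddEquiv.trans (AdjoinRoot.quotEquivQuotMap f _).toAddEquiv)
  refine ⟨⟨e⟩, ?_⟩
  rw [Nat.card_congr e.toEquiv, pow_mul,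
    ← IsLocalRing.card_quotient_span_pow hM hst hst' (Nat.sub_le t k)]
  exact AdjoinRoot.card_map_eq_pow_natDegree hf _

/-- Let `R` be a finite commutative chain ring with maximal ideal `⟨s⟩` of nilpotency
index `t`, `f ∈ R[X]` a monic polynomial, and `0 ≤ k ≤ t`. Then the ideal
`s^k · (R[X]/⟨f⟩)` is isomorphic (as an additive group, via reduction modulo `⟨s^(t-k)⟩`)
to `(R/⟨s^(t-k)⟩)[X] / ⟨f̄⟩`, and hence its cardinality is `|R/⟨s⟩|^((t-k)·deg f)`. -/
theorem card_scaled_quotient_chain_ring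
    (R : Type*) [CommRing R] [Finite R] [IsLocalRing R]
    (hchain : ∀ I J : Ideal R, I ≤ J ∨ J ≤ I)
    (s : R) (hM : IsLocalRing.maximalIdeal R = Ideal.span {s})
    (t : ℕ) (ht : 1 ≤ t) (hst : s ^ t = 0) (hst' : s ^ (t - 1) ≠ 0)
    (f : Polynomial R) (hf : f.Monic) (k : ℕ) (hk : k ≤ t) :
    let Γ := Polynomial R ⧸ Ideal.span {f}
    let sk : Γ := Ideal.Quotient.mk (Ideal.span {f}) (Polynomial.C (s ^ k))
    let fbar : Polynomial (R ⧸ Ideal.span {s ^ (t - k)}) :=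
      f.map (Ideal.Quotient.mk (Ideal.span ({s ^ (t - k)} : Set R)))
    Nonempty ((Ideal.span {sk} : Ideal Γ) ≃+
        (Polynomial (R ⧸ Ideal.span {s ^ (t - k)}) ⧸ Ideal.span {fbar})) ∧
      Nat.card (Ideal.span {sk} : Ideal Γ) =
        Nat.card (R ⧸ Ideal.span ({s} : Set R)) ^ ((t - k) * f.natDegree) :=
  card_scaled_quotient_chain_ring_general R s hM t hst hst' f hf k hk
end

section
/- Let R be a finite commutative chain ring of order 2^a with residue field 𝔽₂ and maximal ideal ⟨s⟩ of nilpotency index t, and G a cyclic group of odd order n. For the primitive idempotent e = \widehat{G}, the cyclic code C = ⟨s^k e⟩ in R[G] (0 ≤ k ≤ t) has exactly 2^{t-k} elements, and every nonzero element of C has weight |G| (full support), so the minimum weight of C is |G|. -/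
/-!
Since `β * ∑ g, g = ε(β) • ∑ g, g` for the augmentation `ε`, the ideal generated by `s^k ê` is
`{r ê | r ∈ (s^k)}`, and `r ↦ r ê` is injective because `|G|` is odd, hence a unit of a local ring
with residue field `𝔽₂`. Every coefficient of `r ê` equals `r / |G|`, which gives full support,
and `(s^k)` has `2^(t-k)` elements because each step `(s^j) ⊃ (s^(j+1))` has index
`|R/(s)| = 2`.
-/

open IsLocalRing

section ResidueFieldTwo

variable {R : Type*} [CommRing R] [IsLocalRing R]

theorem mem_maximalIdeal_or_sub_one_mem (hres : Nat.card (R ⧸ maximalIdeal R) = 2) (r : R) :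
    r ∈ maximalIdeal R ∨ r - 1 ∈ maximalIdeal R := by
  obtain ⟨y, -, hy⟩ := (Nat.card_eq_two_iff' (0 : R ⧸ maximalIdeal R)).1 hres
  rw [← Ideal.Quotient.eq_zero_iff_mem, ← Ideal.Quotient.mk_eq_mk_iff_sub_mem, map_one]
  by_cases hr : Ideal.Quotient.mk (maximalIdeal R) r = 0
  · exact .inl hr
  · exact .inr ((hy _ hr).trans (hy 1 one_ne_zero).symm)

theorem isUnit_natCast_of_odd (hres : Nat.card (R ⧸ maximalIdeal R) = 2) {n : ℕ} (hn : Odd n) :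
    IsUnit (n : R) := by
  have one_notMem : (1 : R) ∉ maximalIdeal R := notMem_maximalIdeal.2 isUnit_one
  have two_mem : (2 : R) ∈ maximalIdeal R := by
    simpa [← one_add_one_eq_two, one_notMem] using mem_maximalIdeal_or_sub_one_mem hres (2 : R)
  obtain ⟨m, rfl⟩ := hn
  refine notMem_maximalIdeal.1 fun h => one_notMem ?_
  have : (1 : R) = ((2 * m + 1 : ℕ) : R) - 2 * m := by push_cast; ring
  rw [this]
  exact sub_mem h (Ideal.mul_mem_right _ _ two_mem)

end ResidueFieldTwo

section UniformizerPowers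

variable {R : Type*} [CommRing R] [IsLocalRing R] {s : R}

theorem pow_notMem_span_pow_succ (hM : maximalIdeal R = Ideal.span {s}) {j : ℕ}
    (hj : s ^ j ≠ 0) : s ^ j ∉ Ideal.span {s ^ (j + 1)} := by
  rw [Ideal.mem_span_singleton']
  rintro ⟨x, hx⟩
  have hxs : IsUnit (1 - x * s) := isUnit_one_sub_self_of_mem_nonunits _
    ((mem_maximalIdeal _).1 (hM ▸ Ideal.mul_mem_left _ x (Ideal.subset_span rfl)))
  exact hj ((hxs.mul_left_eq_zero).1 (by linear_combination -hx))

theorem relIndex_span_pow_succ (hres : Nat.card (R ⧸ maximalIdeal R) = 2)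
    (hM : maximalIdeal R = Ideal.span {s}) {j : ℕ} (hj : s ^ j ≠ 0) :
    (Ideal.span {s ^ (j + 1)}).toAddSubgroup.relIndex (Ideal.span {s ^ j}).toAddSubgroup = 2 := by
  rw [AddSubgroup.relIndex_eq_two_iff_exists_notMem_and']
  refine ⟨-s ^ j, neg_mem (Ideal.subset_span rfl),
    fun h => pow_notMem_span_pow_succ hM hj (neg_mem_iff.1 h), fun b hb => ?_⟩
  obtain ⟨c, rfl⟩ := Ideal.mem_span_singleton'.1 hb
  rcases mem_maximalIdeal_or_sub_one_mem hres c with hc | hc <;>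
    obtain ⟨d, hd⟩ := Ideal.mem_span_singleton'.1 (hM ▸ hc)
  · exact .inr (Ideal.mem_span_singleton'.2 ⟨d, by linear_combination s ^ j * hd⟩)
  · exact .inl (Ideal.mem_span_singleton'.2 ⟨d, by linear_combination s ^ j * hd⟩)

theorem card_span_pow (hres : Nat.card (R ⧸ maximalIdeal R) = 2)
    (hM : maximalIdeal R = Ideal.span {s}) {t : ℕ} (hst : s ^ t = 0) (hst' : s ^ (t - 1) ≠ 0)
    (j : ℕ) : Nat.card (Ideal.span {s ^ j}) = 2 ^ (t - j) := by
  induction h : t - j generalizing j with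
  | zero =>
    rw [pow_eq_zero_of_le (by omega) hst, Ideal.span_singleton_eq_bot.2 rfl, pow_zero]
    exact Nat.card_unique
  | succ d ih =>
    have hj : s ^ j ≠ 0 := fun hj => hst' (pow_eq_zero_of_le (by omega) hj)
    have hle : Ideal.span {s ^ (j + 1)} ≤ Ideal.span {s ^ j} :=
      Ideal.span_singleton_le_span_singleton.2 (pow_dvd_pow s j.le_succ)
    change Nat.card (Ideal.span {s ^ j}).toAddSubgroup = _
    rw [← AddSubgroup.relIndex_bot_left, ← AddSubgroup.relIndex_mul_relIndex _ _ _ bot_le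
      ((Submodule.toAddSubgroup_le _ _).2 hle), AddSubgroup.relIndex_bot_left,
      relIndex_span_pow_succ hres hM hj, pow_succ 2 d, ← ih (j + 1) (by omega)]
    rfl

end UniformizerPowers

namespace MonoidAlgebra

variable {R G : Type*} [Fintype G]

section Semiring

variable [Semiring R]

theorem coeff_sum_single_one (g : G) : (∑ h : G, single h (1 : R)).coeff g = 1 := by
  classical
  simp [coeff_single, Finsupp.single_apply]

theorem mul_sum_single_one [Group G] (β : R[G]) :
    β * ∑ g : G, single g (1 : R) = (∑ g : G, β.coeff g) • ∑ g : G, single g (1 : R) := by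
  ext x
  rw [coeff_smul_apply, coeff_sum_single_one, smul_eq_mul, mul_one, Finset.mul_sum, coeff_sum,
    Finset.sum_apply']
  simp only [coeff_mul_single_apply, mul_one]
  exact Fintype.sum_equiv ((Equiv.inv G).trans (Equiv.mulLeft x)) _ _ fun _ => rfl

theorem support_smul_sum_single_one {r : R} (hr : r ≠ 0) :
    (r • ∑ g : G, single g (1 : R)).coeff.support = Finset.univ :=
  Finset.eq_univ_of_forall fun g => by
    simpa [coeff_smul_apply, coeff_sum_single_one] using hr

end Semiring

variable [CommSemiring R] [Group G]

theorem mem_span_smul_sum_single_one_iff {x c : R} {α : R[G]} :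
    α ∈ Ideal.span {x • c • ∑ g : G, single g (1 : R)} ↔
      ∃ r ∈ Ideal.span {x}, r • c • ∑ g : G, single g (1 : R) = α := by
  constructor
  · intro hα
    obtain ⟨β, rfl⟩ := Ideal.mem_span_singleton'.1 hα
    refine ⟨(∑ g, β.coeff g) * x, Ideal.mul_mem_left _ _ (Ideal.mem_span_singleton_self x), ?_⟩
    rw [mul_smul_comm, mul_smul_comm, mul_sum_single_one]
    simp only [smul_smul]
    congr 1
    ring
  · rintro ⟨r, hr, rfl⟩
    obtain ⟨d, rfl⟩ := Ideal.mem_span_singleton'.1 hr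
    rw [mul_smul]
    exact Submodule.smul_of_tower_mem _ d (Ideal.mem_span_singleton_self _)

theorem card_span_smul_sum_single_one {c : R} (hc : IsRegular c) (x : R) :
    Nat.card (Ideal.span {x • c • ∑ g : G, single g (1 : R)}) = Nat.card (Ideal.span {x}) := by
  have hinj : Function.Injective fun r : R => r • c • ∑ g : G, single g (1 : R) := by
    intro r r' h
    have h1 := congr_arg (fun α : R[G] => α.coeff 1) h
    simp only [coeff_smul_apply, coeff_sum_single_one, smul_eq_mul, mul_one] at h1
    exact hc.2 h1
  have himage : (Ideal.span {x • c • ∑ g : G, single g (1 : R)} : Set R[G]) =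
      (fun r : R => r • c • ∑ g : G, single g (1 : R)) '' Ideal.span {x} := by
    ext α
    exact mem_span_smul_sum_single_one_iff
  change Nat.card (_ : Set R[G]) = Nat.card (_ : Set R)
  rw [← Nat.card_image_of_injective hinj, ← himage]

end MonoidAlgebra

theorem code_of_hat_G_general
    (R : Type*) [CommRing R] [IsLocalRing R]
    (hres : Nat.card (R ⧸ IsLocalRing.maximalIdeal R) = 2)
    (s : R) (hM : IsLocalRing.maximalIdeal R = Ideal.span {s})
    (t : ℕ) (hst : s ^ t = 0) (hst' : s ^ (t - 1) ≠ 0)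
    (G : Type*) [CommGroup G] [Fintype G] (hodd : Odd (Fintype.card G))
    (k : ℕ) :
    let e : MonoidAlgebra R G :=
      Ring.inverse ((Fintype.card G : R)) • ∑ g : G, MonoidAlgebra.single g (1 : R)
    let C : Ideal (MonoidAlgebra R G) := Ideal.span {s ^ k • e}
    Nat.card C = 2 ^ (t - k) ∧
      ∀ α ∈ C, α ≠ 0 → (α : MonoidAlgebra R G).coeff.support.card = Fintype.card G := by
  intro e C
  have hinv : IsRegular (Ring.inverse (Fintype.card G : R)) :=
    (isUnit_natCast_of_odd hres hodd).ringInverse.isRegular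
  refine ⟨(MonoidAlgebra.card_span_smul_sum_single_one hinv _).trans
    (card_span_pow hres hM hst hst' k), fun α hα hne => ?_⟩
  obtain ⟨r, -, rfl⟩ := MonoidAlgebra.mem_span_smul_sum_single_one_iff.1 hα
  rw [smul_smul] at hne ⊢
  rw [MonoidAlgebra.support_smul_sum_single_one (left_ne_zero_of_smul hne), Finset.card_univ]

/-- Let `R` be a finite commutative chain ring of order `2^a` with residue field `𝔽₂` and
maximal ideal `⟨s⟩` of nilpotency index `t`, and `G` a cyclic group of odd order. For the
primitive idempotent `e = Ĝ = |G|⁻¹ ∑_{g ∈ G} g`, the cyclic code `C = ⟨s^k e⟩` in `R[G]`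
(`0 ≤ k ≤ t`) has exactly `2^(t-k)` elements, and every nonzero element of `C` has weight
`|G|` (full support); hence the minimum weight of `C` is `|G|`. -/
theorem code_of_hat_G
    (R : Type*) [CommRing R] [Finite R] [IsLocalRing R]
    (hchain : ∀ I J : Ideal R, I ≤ J ∨ J ≤ I)
    (a : ℕ) (hcard : Nat.card R = 2 ^ a)
    (hres : Nat.card (R ⧸ IsLocalRing.maximalIdeal R) = 2)
    (s : R) (hM : IsLocalRing.maximalIdeal R = Ideal.span {s})
    (t : ℕ) (ht : 1 ≤ t) (hst : s ^ t = 0) (hst' : s ^ (t - 1) ≠ 0)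
    (G : Type*) [CommGroup G] [Fintype G] [IsCyclic G] (hodd : Odd (Fintype.card G))
    (k : ℕ) (hk : k ≤ t) :
    let e : MonoidAlgebra R G :=
      Ring.inverse ((Fintype.card G : R)) • ∑ g : G, MonoidAlgebra.single g (1 : R)
    let C : Ideal (MonoidAlgebra R G) := Ideal.span {s ^ k • e}
    Nat.card C = 2 ^ (t - k) ∧
      ∀ α ∈ C, α ≠ 0 → (α : MonoidAlgebra R G).coeff.support.card = Fintype.card G :=
  code_of_hat_G_general R hres s hM t hst hst' G hodd k
end

section
/- Let R be a finite commutative chain ring with residue field 𝔽₂ and maximal ideal ⟨s⟩ of nilpotency index t, G cyclic of odd order generated by commuting generators with a distinguished element a of order p^n (p odd prime dividing |G|), and e = \widehat{H'} − \widehat{H} where H = (subgroup with a replaced by a^{p^j}) and H' = (subgroup with a replaced by a^{p^{j-1}}), H ⊆ H'. Then the minimum weight of the code ⟨s^k e⟩ equals 2·|H|, i.e., twice the index-adjusted subgroup size. -/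
/-!
Write `σ_L` (`subgroupSum`) for the sum of the elements of a subgroup `L` and
`L̂ = |L|⁻¹ σ_L` (`subgroupAverage`); odd orders are units because the residue field is `𝔽₂`.
Every multiple `α` of `e = Ĥ' − Ĥ` satisfies
`α h = α` for `h ∈ H`, so its coefficients are constant on the cosets `xH`, and `α σ_{H'} = 0`.
If the support of `α ≠ 0` lay in a single coset `xH`, the coefficient of `α σ_{H'}` at `x`
would be `|H| α(x) ≠ 0`; hence the support meets two cosets and has at least `2|H|` elements.
Conversely, for `g = a^(p^(j-1)) ∈ H' \ H`, `(1 − g) s^k e = s^k |H|⁻¹ (g σ_H − σ_H)` is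
supported on `H ∪ gH`.
-/

open Finset MonoidAlgebra

lemma IsLocalRing.isUnit_natCast_of_odd {R : Type*} [CommRing R] [IsLocalRing R]
    (hres : Nat.card (ResidueField R) = 2) {m : ℕ} (hm : Odd m) :
    IsUnit (m : R) := by
  have h2 : (2 : ResidueField R) = 0 := by
    simpa [hres] using card_nsmul_eq_zero' (G := ResidueField R) (x := 1)
  obtain ⟨c, rfl⟩ := hm
  rw [← residue_ne_zero_iff_isUnit, map_natCast]
  push_cast
  simp [h2]

lemma pow_pow_eq_pow_pow_sub_one_pow {M : Type*} [Monoid M] (a : M) (p : ℕ) {j : ℕ}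
    (hj : 1 ≤ j) : a ^ p ^ j = (a ^ p ^ (j - 1)) ^ p := by
  rw [← pow_mul, ← pow_succ, Nat.sub_add_cancel hj]

lemma pow_prime_pow_pred_notMem_zpowers {G : Type*} [Group G] {a : G} {p n j : ℕ}
    (hp : p.Prime) (hord : orderOf a = p ^ n) (hj1 : 1 ≤ j) (hjn : j ≤ n) :
    a ^ p ^ (j - 1) ∉ Subgroup.zpowers (a ^ p ^ j) := by
  have hdvd : p ∣ orderOf (a ^ p ^ (j - 1)) := by
    rw [orderOf_pow_of_dvd (pow_ne_zero _ hp.ne_zero) (hord ▸ pow_dvd_pow p (by omega)), hord,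
      Nat.pow_div (by omega) hp.pos]
    exact dvd_pow_self p (by omega)
  rw [pow_pow_eq_pow_pow_sub_one_pow a p hj1, mem_zpowers_pow_iff]
  exact fun hcop => hp.one_lt.ne' (Nat.Coprime.eq_one_of_dvd hcop hdvd)

lemma Subgroup.mem_of_mem_sup_of_disjoint {G : Type*} [CommGroup G] {B K K' : Subgroup G}
    (hBK : Disjoint B K) (hK' : K' ≤ K) {x : G} (hxK : x ∈ K) (hx : x ∈ B ⊔ K') : x ∈ K' := by
  obtain ⟨b, hb, y, hy, rfl⟩ := mem_sup.mp hx
  have hbK : b ∈ K := by simpa using K.mul_mem hxK (K.inv_mem (hK' hy))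
  rwa [disjoint_def.mp hBK hb hbK, one_mul]

namespace MonoidAlgebra

variable {R G : Type*} [Group G]

lemma coeff_mul_eq_of_forall_mul_single_eq [Semiring R] {H : Subgroup G} {α : MonoidAlgebra R G}
    (hα : ∀ h ∈ H, α * single h 1 = α) (x : G) {h : G} (hh : h ∈ H) :
    α.coeff (x * h) = α.coeff x := by
  simpa using (congrArg (fun β : MonoidAlgebra R G => β.coeff (x * h)) (hα h hh)).symm

variable [Finite G]

variable (R) in
noncomputable def subgroupSum [Semiring R] (L : Subgroup G) : MonoidAlgebra R G :=
  ∑ h ∈ (L : Set G).toFinite.toFinset, single h 1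

lemma card_toFinset_subgroup (L : Subgroup G) : #(L : Set G).toFinite.toFinset = Nat.card L := by
  rw [← Set.ncard_eq_toFinset_card, ← Nat.card_coe_set_eq, SetLike.coe_sort_coe]

section Semiring

variable [Semiring R] {L L' : Subgroup G}

open scoped Classical in
lemma coeff_subgroupSum (x : G) : (subgroupSum R L).coeff x = if x ∈ L then 1 else 0 := by
  simp only [subgroupSum, coeff_sum, Finsupp.finsetSum_apply, coeff_single, Finsupp.single_apply,
    sum_ite_eq', Set.Finite.mem_toFinset, SetLike.mem_coe]

lemma subgroupSum_mul_single_of_mem {h : G} (hh : h ∈ L) :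
    subgroupSum R L * single h 1 = subgroupSum R L := by
  ext x
  rw [coeff_mul_single_apply, coeff_subgroupSum, coeff_subgroupSum, mul_one,
    L.mul_mem_cancel_right (L.inv_mem hh)]

lemma single_mul_subgroupSum_of_mem {h : G} (hh : h ∈ L) :
    single h 1 * subgroupSum R L = subgroupSum R L := by
  ext x
  rw [coeff_single_mul_apply, coeff_subgroupSum, coeff_subgroupSum, one_mul,
    L.mul_mem_cancel_left (L.inv_mem hh)]

lemma subgroupSum_mul_subgroupSum_of_le (hLL' : L ≤ L') :
    subgroupSum R L * subgroupSum R L' = (Nat.card L : R) • subgroupSum R L' := by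
  rw [subgroupSum, sum_mul, sum_congr rfl fun h hh =>
    single_mul_subgroupSum_of_mem (hLL' ((Set.Finite.mem_toFinset _).mp hh)),
    sum_const, card_toFinset_subgroup, Nat.cast_smul_eq_nsmul]

lemma coeff_mul_subgroupSum (α : MonoidAlgebra R G) (g : G) :
    (α * subgroupSum R L).coeff g = ∑ h ∈ (L : Set G).toFinite.toFinset, α.coeff (g * h⁻¹) := by
  simp only [subgroupSum, mul_sum, coeff_sum, Finsupp.finsetSum_apply,
    coeff_mul_single_apply, mul_one]

variable {H H' : Subgroup G} {α : MonoidAlgebra R G}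

lemma two_mul_card_le_card_support (hα : ∀ h ∈ H, α * single h 1 = α) {x y : G}
    (hx : x ∈ α.coeff.support) (hy : y ∈ α.coeff.support) (hxy : x⁻¹ * y ∉ H) :
    2 * Nat.card H ≤ #α.coeff.support := by
  classical
  set T := (H : Set G).toFinite.toFinset
  have hcoset_sub {z : G} (hz : z ∈ α.coeff.support) : T.image (z * ·) ⊆ α.coeff.support := by
    simp only [image_subset_iff, Finsupp.mem_support_iff] at hz ⊢
    intro h hh
    rwa [coeff_mul_eq_of_forall_mul_single_eq hα z ((Set.Finite.mem_toFinset _).mp hh)]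
  have hdisj : Disjoint (T.image (x * ·)) (T.image (y * ·)) := by
    simp only [disjoint_left, mem_image, not_exists, not_and]
    rintro _ ⟨h₁, hh₁, rfl⟩ h₂ hh₂ heq
    apply hxy
    have : x⁻¹ * y = h₁ * h₂⁻¹ := by rw [eq_mul_inv_iff_mul_eq, mul_assoc, heq, inv_mul_cancel_left]
    rw [this]
    exact H.mul_mem ((Set.Finite.mem_toFinset _).mp hh₁)
      (H.inv_mem ((Set.Finite.mem_toFinset _).mp hh₂))
  calc 2 * Nat.card H = #(T.image (x * ·)) + #(T.image (y * ·)) := by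
        rw [card_image_of_injective _ (mul_right_injective x),
          card_image_of_injective _ (mul_right_injective y), card_toFinset_subgroup, two_mul]
    _ = #(T.image (x * ·) ∪ T.image (y * ·)) := (card_union_of_disjoint hdisj).symm
    _ ≤ #α.coeff.support := card_le_card (union_subset (hcoset_sub hx) (hcoset_sub hy))

lemma exists_mem_support_inv_mul_notMem (hα : ∀ h ∈ H, α * single h 1 = α) (hHH' : H ≤ H')
    (hH : IsUnit (Nat.card H : R)) (hα' : α * subgroupSum R H' = 0) {g : G}
    (hg : g ∈ α.coeff.support) : ∃ y ∈ α.coeff.support, g⁻¹ * y ∉ H := by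
  by_contra! hcoset
  have hsub : (H : Set G).toFinite.toFinset ⊆ (H' : Set G).toFinite.toFinset :=
    Set.Finite.toFinset_subset_toFinset.mpr hHH'
  have hvanish : ∀ h ∈ (H' : Set G).toFinite.toFinset, h ∉ (H : Set G).toFinite.toFinset →
      α.coeff (g * h⁻¹) = 0 := by
    intro h _ hh
    by_contra hne
    apply hh
    simpa [Set.Finite.mem_toFinset] using hcoset _ (Finsupp.mem_support_iff.mpr hne)
  have hcoeff : (Nat.card H : R) * α.coeff g = 0 := calc
    (Nat.card H : R) * α.coeff g = ∑ h ∈ (H : Set G).toFinite.toFinset, α.coeff (g * h⁻¹) := by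
      rw [sum_congr rfl fun h hh => coeff_mul_eq_of_forall_mul_single_eq hα g
        (H.inv_mem ((Set.Finite.mem_toFinset _).mp hh)), sum_const, card_toFinset_subgroup,
        nsmul_eq_mul]
    _ = ∑ h ∈ (H' : Set G).toFinite.toFinset, α.coeff (g * h⁻¹) := sum_subset hsub hvanish
    _ = 0 := by rw [← coeff_mul_subgroupSum, hα']; rfl
  exact Finsupp.mem_support_iff.mp hg (hH.mul_right_eq_zero.mp hcoeff)

lemma two_mul_card_le_card_support_of_mul_subgroupSum_eq_zero
    (hα : ∀ h ∈ H, α * single h 1 = α) (hHH' : H ≤ H') (hH : IsUnit (Nat.card H : R))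
    (hα' : α * subgroupSum R H' = 0) (hα0 : α ≠ 0) : 2 * Nat.card H ≤ #α.coeff.support := by
  obtain ⟨g, hg⟩ := Finsupp.support_nonempty_iff.mpr (coeff_eq_zero.not.mpr hα0)
  obtain ⟨y, hy, hgy⟩ := exists_mem_support_inv_mul_notMem hα hHH' hH hα' hg
  exact two_mul_card_le_card_support hα hg hy hgy

end Semiring

lemma card_support_smul_single_mul_subgroupSum_sub [Ring R] {L : Subgroup G} {c : R} (hc : c ≠ 0)
    {g : G} (hg : g ∉ L) :
    #(c • (single g 1 * subgroupSum R L - subgroupSum R L)).coeff.support = 2 * Nat.card L := by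
  classical
  set T := (L : Set G).toFinite.toFinset
  have hmem (x : G) : x ∈ T ↔ x ∈ L := Set.Finite.mem_toFinset _
  have hsupport : (c • (single g 1 * subgroupSum R L - subgroupSum R L)).coeff.support =
      T.image (g * ·) ∪ T := by
    ext x
    have hx : g⁻¹ * x ∈ L → x ∉ L := fun h₁ h₂ => hg (by simpa using L.mul_mem h₂ (L.inv_mem h₁))
    by_cases h₁ : g⁻¹ * x ∈ L
    · simp [coeff_single_mul_apply, coeff_subgroupSum, hmem, h₁, hx h₁, hc]
    · by_cases h₂ : x ∈ L <;> simp [coeff_single_mul_apply, coeff_subgroupSum, hmem, h₁, h₂, hc]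
  have hdisj : Disjoint (T.image (g * ·)) T := by
    simp only [disjoint_left, mem_image, hmem]
    rintro _ ⟨h, hh, rfl⟩ hgh
    exact hg (by simpa using L.mul_mem hgh (L.inv_mem hh))
  rw [hsupport, card_union_of_disjoint hdisj, card_image_of_injective _ (mul_right_injective g),
    card_toFinset_subgroup, two_mul]

variable (R) in
noncomputable def subgroupAverage [Semiring R] (L : Subgroup G) : MonoidAlgebra R G :=
  Ring.inverse (Nat.card L : R) • subgroupSum R L

section CommRing

variable [CommRing R] {H H' : Subgroup G}

lemma subgroupAverage_mul_single_of_mem {h : G} (hh : h ∈ H) :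
    subgroupAverage R H * single h 1 = subgroupAverage R H := by
  rw [subgroupAverage, smul_mul_assoc, subgroupSum_mul_single_of_mem hh]

lemma single_mul_subgroupAverage_of_mem {h : G} (hh : h ∈ H) :
    single h 1 * subgroupAverage R H = subgroupAverage R H := by
  rw [subgroupAverage, mul_smul_comm, single_mul_subgroupSum_of_mem hh]

lemma subgroupAverage_mul_subgroupSum_of_le (hH : IsUnit (Nat.card H : R)) (hHH' : H ≤ H') :
    subgroupAverage R H * subgroupSum R H' = subgroupSum R H' := by
  rw [subgroupAverage, smul_mul_assoc, subgroupSum_mul_subgroupSum_of_le hHH', smul_smul,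
    Ring.inverse_mul_cancel _ hH, one_smul]

lemma subgroupAverage_sub_mul_single_of_mem (hHH' : H ≤ H') {h : G} (hh : h ∈ H) :
    (subgroupAverage R H' - subgroupAverage R H) * single h 1 =
      subgroupAverage R H' - subgroupAverage R H := by
  rw [sub_mul, subgroupAverage_mul_single_of_mem (hHH' hh), subgroupAverage_mul_single_of_mem hh]

lemma subgroupAverage_sub_mul_subgroupSum (hH : IsUnit (Nat.card H : R))
    (hH' : IsUnit (Nat.card H' : R)) (hHH' : H ≤ H') :
    (subgroupAverage R H' - subgroupAverage R H) * subgroupSum R H' = 0 := by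
  rw [sub_mul, subgroupAverage_mul_subgroupSum_of_le hH' le_rfl,
    subgroupAverage_mul_subgroupSum_of_le hH hHH', sub_self]

lemma one_sub_single_mul_subgroupAverage_sub {g : G} (hg : g ∈ H') :
    (1 - single g 1) * (subgroupAverage R H' - subgroupAverage R H) =
      Ring.inverse (Nat.card H : R) • (single g 1 * subgroupSum R H - subgroupSum R H) := by
  rw [sub_mul, one_mul, mul_sub, single_mul_subgroupAverage_of_mem hg, subgroupAverage,
    subgroupAverage, mul_smul_comm, smul_sub]
  abel

end CommRing

end MonoidAlgebra

theorem min_weight_code_hat_difference_general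
    (R : Type*) [CommRing R] [IsLocalRing R]
    (hres : Nat.card (R ⧸ IsLocalRing.maximalIdeal R) = 2)
    (s : R)
    (t : ℕ) (hst' : s ^ (t - 1) ≠ 0)
    (G : Type*) [CommGroup G] [Fintype G] (hodd : Odd (Fintype.card G))
    (p n : ℕ) (hp : p.Prime)
    (a : G) (hord : orderOf a = p ^ n)
    (B : Subgroup G) (hcompl : B.IsComplement' (Subgroup.zpowers a))
    (j : ℕ) (hj1 : 1 ≤ j) (hjn : j ≤ n) (k : ℕ) (hk : k < t) :
    let hat : Subgroup G → MonoidAlgebra R G := fun L =>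
      Ring.inverse ((Nat.card L : R)) •
        ∑ h ∈ (L : Set G).toFinite.toFinset, MonoidAlgebra.single h (1 : R)
    let H : Subgroup G := B ⊔ Subgroup.zpowers (a ^ p ^ j)
    let H' : Subgroup G := B ⊔ Subgroup.zpowers (a ^ p ^ (j - 1))
    let e : MonoidAlgebra R G := hat H' - hat H
    let C : Ideal (MonoidAlgebra R G) := Ideal.span {s ^ k • e}
    (∃ α ∈ C, α ≠ 0 ∧ (α : MonoidAlgebra R G).coeff.support.card = 2 * Nat.card H) ∧
      (∀ α ∈ C, α ≠ 0 → 2 * Nat.card H ≤ (α : MonoidAlgebra R G).coeff.support.card) := by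
  intro hat H H' e C
  have he : e = subgroupAverage R H' - subgroupAverage R H := rfl
  have hHH' : H ≤ H' := by
    refine sup_le_sup_left (Subgroup.zpowers_le.mpr ?_) B
    rw [pow_pow_eq_pow_pow_sub_one_pow a p hj1]
    exact Subgroup.pow_mem _ (Subgroup.mem_zpowers _) p
  have hunit (L : Subgroup G) : IsUnit (Nat.card L : R) :=
    IsLocalRing.isUnit_natCast_of_odd hres
      (hodd.of_dvd_nat (Nat.card_eq_fintype_card (α := G) ▸ L.card_subgroup_dvd_card))
  have hg' : a ^ p ^ (j - 1) ∉ H := fun hmem =>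
    pow_prime_pow_pred_notMem_zpowers hp hord hj1 hjn
      (Subgroup.mem_of_mem_sup_of_disjoint hcompl.disjoint
        (Subgroup.zpowers_le.mpr (Subgroup.pow_mem _ (Subgroup.mem_zpowers a) _))
        (Subgroup.pow_mem _ (Subgroup.mem_zpowers a) _) hmem)
  have hc : s ^ k * Ring.inverse (Nat.card H : R) ≠ 0 := by
    rw [Ne, (hunit H).ringInverse.mul_left_eq_zero]
    exact fun h => hst' (pow_eq_zero_of_le (by omega) h)
  refine ⟨⟨(1 - single (a ^ p ^ (j - 1)) 1) * (s ^ k • e),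
    Ideal.mul_mem_left _ _ (Ideal.subset_span rfl), ?_⟩, fun α hα hα0 => ?_⟩
  · have hweight : #((1 - single (a ^ p ^ (j - 1)) 1) * (s ^ k • e)).coeff.support =
        2 * Nat.card H := by
      rw [mul_smul_comm, he, one_sub_single_mul_subgroupAverage_sub
        (Subgroup.mem_sup_right (Subgroup.mem_zpowers _)), smul_smul]
      exact card_support_smul_single_mul_subgroupSum_sub hc hg'
    refine ⟨fun h0 => ?_, hweight⟩
    simp only [h0, coeff_zero, Finsupp.support_zero, card_empty] at hweight
    exact (Nat.card_pos (α := H)).ne' (by omega)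
  · obtain ⟨β, rfl⟩ := Ideal.mem_span_singleton'.mp hα
    refine two_mul_card_le_card_support_of_mul_subgroupSum_eq_zero
      (fun h hh => ?_) hHH' (hunit H) ?_ hα0
    · rw [mul_assoc, smul_mul_assoc, he, subgroupAverage_sub_mul_single_of_mem hHH' hh]
    · rw [mul_assoc, smul_mul_assoc, he,
        subgroupAverage_sub_mul_subgroupSum (hunit H) (hunit H') hHH', smul_zero,
        mul_zero]

/-- Let `R` be a finite commutative chain ring with residue field `𝔽₂` and maximal ideal
`⟨s⟩` of nilpotency index `t`, and `G` a finite commutative group of odd order containing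
a distinguished element `a` of order `p^n` (`p` an odd prime) with complement `B`
(so `G = B × ⟨a⟩`). For `H = B ⊔ ⟨a^(p^j)⟩ ⊆ H' = B ⊔ ⟨a^(p^(j-1))⟩` and
`e = Ĥ' − Ĥ`, the minimum weight of the code `⟨s^k e⟩` equals `2·|H|`. -/
theorem min_weight_code_hat_difference
    (R : Type*) [CommRing R] [Finite R] [IsLocalRing R]
    (hchain : ∀ I J : Ideal R, I ≤ J ∨ J ≤ I)
    (hres : Nat.card (R ⧸ IsLocalRing.maximalIdeal R) = 2)
    (s : R) (hM : IsLocalRing.maximalIdeal R = Ideal.span {s})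
    (t : ℕ) (ht : 1 ≤ t) (hst : s ^ t = 0) (hst' : s ^ (t - 1) ≠ 0)
    (G : Type*) [CommGroup G] [Fintype G] (hodd : Odd (Fintype.card G))
    (p n : ℕ) (hp : p.Prime) (hpodd : Odd p) (hpdvd : p ∣ Fintype.card G)
    (a : G) (hord : orderOf a = p ^ n)
    (B : Subgroup G) (hcompl : B.IsComplement' (Subgroup.zpowers a))
    (j : ℕ) (hj1 : 1 ≤ j) (hjn : j ≤ n) (k : ℕ) (hk : k < t) :
    let hat : Subgroup G → MonoidAlgebra R G := fun L =>
      Ring.inverse ((Nat.card L : R)) •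
        ∑ h ∈ (L : Set G).toFinite.toFinset, MonoidAlgebra.single h (1 : R)
    let H : Subgroup G := B ⊔ Subgroup.zpowers (a ^ p ^ j)
    let H' : Subgroup G := B ⊔ Subgroup.zpowers (a ^ p ^ (j - 1))
    let e : MonoidAlgebra R G := hat H' - hat H
    let C : Ideal (MonoidAlgebra R G) := Ideal.span {s ^ k • e}
    (∃ α ∈ C, α ≠ 0 ∧ (α : MonoidAlgebra R G).coeff.support.card = 2 * Nat.card H) ∧
      (∀ α ∈ C, α ≠ 0 → 2 * Nat.card H ≤ (α : MonoidAlgebra R G).coeff.support.card) :=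
  min_weight_code_hat_difference_general R hres s t hst' G hodd p n hp a hord B hcompl j hj1 hjn k
    hk
end
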